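/- Candidate filtering preserves top-k results: if from the candidate set S one removes every object o for which at least k other objects in S are strictly superior to o (uniformly over all preferences), then for every preference vector p, any top-k result set computed over S is still a top-k result set over the filtered set. -/
import Mathlib


/-- Candidate filtering (removing objects strictly dominated by at least `k`
others, uniformly over all preferences) preserves top-`k` result sets. -/
theorem candidate_filter_preserves_topk {α P : Type*} [DecidableEq α]
    (S : Finset α) (F : P → α → ℝ) (k : ℕ) (hk : 1 ≤ k)
    (S' : Finset α)
    (hS' : ∀ o, o ∈ S' ↔ o ∈ S ∧
      ¬ ∃ D : Finset α, D ⊆ S ∧ k ≤ D.card ∧ o ∉ D ∧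
        ∀ (p : P), ∀ o' ∈ D, F p o < F p o') :
    ∀ (p : P) (T : Finset α), T ⊆ S → T.card = k →
      (∀ a ∈ T, ∀ b ∈ S \ T, F p b ≤ F p a) →
      T ⊆ S' ∧ (∀ a ∈ T, ∀ b ∈ S' \ T, F p b ≤ F p a) := by
  intro p T hTS hTcard hTop
  have hsub : T ⊆ S' := by
    intro a ha
    rw [hS']
    refine ⟨hTS ha, ?_⟩
    rintro ⟨D, hDS, hDcard, haD, hdom⟩
    have hDT : D ⊆ T := by
      intro o' ho'
      by_contra ho'T
      have h1 : F p o' ≤ F p a := hTop a ha o' (Finset.mem_sdiff.mpr ⟨hDS ho', ho'T⟩)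
      exact absurd (hdom p o' ho') (not_lt.mpr h1)
    have : D = T := Finset.eq_of_subset_of_card_le hDT (by omega)
    exact haD (this ▸ ha)
  refine ⟨hsub, ?_⟩
  intro a ha b hb
  have hbS : b ∈ S \ T := by
    rw [Finset.mem_sdiff] at hb ⊢
    exact ⟨((hS' b).mp hb.1).1, hb.2⟩
  exact hTop a ha b hbS
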